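/- Let d \ge 2 and let h be a differential polynomial in one variable, homogeneous of degree d (deg u_i = i), of the form h = \sum_{\lambda \in \mathcal{P}_d} h_\lambda(u_0) u_{\lambda_1}\cdots u_{\lambda_{l(\lambda)}} (sum over partitions of d into parts \ge 1, coefficients formal power series in u_0). Then there exists a unique differential polynomial \tilde\theta, homogeneous of degree d, such that h - \tilde\theta lies in the image of \partial_x and every monomial of \tilde\theta has at least two factors and its highest-index derivative variable occurs with multiplicity at least 2 (i.e., \tilde\theta = \sum_{\lambda \in \mathcal{P}^\circ_d} \tilde\theta_\lambda(u_0) u_\lambda with l(\lambda)\ge 2 and \lambda_1 = \lambda_2). -/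

import Mathlib

open MvPolynomial

/-- Polynomials in the variables `u_1, u_2, …` (with `X i` representing `u_{i+1}`). -/
abbrev UPoly : Type := MvPolynomial ℕ ℚ

/-- The ring `ℚ[[u_0]][u_1, u_2, …]` of differential polynomials whose coefficients are
formal power series in `u_0`, realized inside `(ℚ[u_1, u_2, …])[[u_0]]`. -/
abbrev UDiff : Type := PowerSeries UPoly

/-- The part `∑_{i ≥ 1} u_{i+1} ∂/∂u_i` of the total `x`-derivative, acting on the
polynomial coefficients. -/
noncomputable def dxU : Module.End ℚ UPoly :=
  (MvPolynomial.mkDerivation ℚ (fun i => (X (i + 1) : UPoly))).toLinearMap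

/-- The partial derivative `∂/∂u_0`, i.e. the derivative of the power series in `u_0`. -/
noncomputable def d0B : Module.End ℚ UDiff where
  toFun f := PowerSeries.mk fun m => ((m : ℚ) + 1) • PowerSeries.coeff (m + 1) f
  map_add' f g := by
    ext m
    simp [PowerSeries.coeff_mk, smul_add]
  map_smul' c f := by
    ext m
    simp only [PowerSeries.coeff_mk, PowerSeries.coeff_smul, RingHom.id_apply]
    rw [smul_comm]

/-- A `ℚ`-linear map on coefficients, applied coefficientwise to power series. -/
noncomputable def cwB (g : Module.End ℚ UPoly) : Module.End ℚ UDiff where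
  toFun f := PowerSeries.mk fun m => g (PowerSeries.coeff m f)
  map_add' f h := by
    ext m
    simp [PowerSeries.coeff_mk]
  map_smul' c f := by
    ext m
    simp [PowerSeries.coeff_mk, PowerSeries.coeff_smul]

/-- The total `x`-derivative `∂_x = u_1 ∂/∂u_0 + ∑_{i ≥ 1} u_{i+1} ∂/∂u_i` on
`ℚ[[u_0]][u_1, u_2, …]`. -/
noncomputable def dxB : Module.End ℚ UDiff where
  toFun f := PowerSeries.mk fun m =>
    dxU (PowerSeries.coeff m f) +
      ((m : ℚ) + 1) • ((X 0 : UPoly) * PowerSeries.coeff (m + 1) f)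
  map_add' f g := by
    ext m
    simp [PowerSeries.coeff_mk, mul_add, smul_add]
    ring
  map_smul' c f := by
    ext m
    simp only [PowerSeries.coeff_mk, PowerSeries.coeff_smul, map_smul, RingHom.id_apply,
      smul_add]
    rw [mul_smul_comm, smul_comm]

/-- The partial derivative `∂/∂u_n` on `ℚ[[u_0]][u_1, u_2, …]`. -/
noncomputable def pdB : ℕ → Module.End ℚ UDiff
  | 0 => d0B
  | n + 1 => cwB (pderiv n).toLinearMap

/-- The variational derivative `δf/δu = ∑_n (-∂_x)^n (∂f/∂u_n)`. -/
noncomputable def varDerB (f : UDiff) : UDiff :=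
  ∑ᶠ n : ℕ, ((-1 : ℚ) ^ n) • ((dxB ^ n) (pdB n f))

/-- `f` is homogeneous of degree `d` for the grading `deg u_i = i` (so `deg u_0 = 0`):
every power-series coefficient of `f` is weighted homogeneous of degree `d`, the variable
`X i` (representing `u_{i+1}`) having weight `i + 1`. -/
def IsHomB (d : ℕ) (f : UDiff) : Prop :=
  ∀ m : ℕ, (PowerSeries.coeff m f).IsWeightedHomogeneous (fun i => i + 1) d

/-- A monomial (exponent function on the variables `u_1, u_2, …`, in the shifted
indexing) in which the variable of highest index occurs with multiplicity at least 2. -/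
def TopMultTwo (e : ℕ →₀ ℕ) : Prop :=
  ∃ k ∈ e.support, 2 ≤ e k ∧ ∀ j ∈ e.support, j ≤ k
section Aux

open Finsupp

/-- weight function -/
abbrev ww : ℕ → ℕ := fun i => i + 1

noncomputable abbrev wdeg (e : ℕ →₀ ℕ) : ℕ := Finsupp.weight ww e

lemma wdeg_apply (e : ℕ →₀ ℕ) : wdeg e = ∑ i ∈ e.support, e i * (i + 1) := by
  simp [wdeg, Finsupp.weight_apply, Finsupp.sum, mul_comm]

lemma wdeg_single (i c : ℕ) : wdeg (Finsupp.single i c) = c * (i + 1) := by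
  simp [wdeg, Finsupp.weight_apply, Finsupp.sum_single_index]

lemma wdeg_add (e f : ℕ →₀ ℕ) : wdeg (e + f) = wdeg e + wdeg f := by
  simp [wdeg]

lemma mul_le_wdeg (e : ℕ →₀ ℕ) (i : ℕ) : e i * (i + 1) ≤ wdeg e := by
  by_cases h : i ∈ e.support
  · rw [wdeg_apply]
    exact Finset.single_le_sum (f := fun i => e i * (i+1)) (fun j _ => Nat.zero_le _) h
  · simp [Finsupp.notMem_support_iff.mp h]

lemma apply_le_wdeg (e : ℕ →₀ ℕ) (i : ℕ) : e i ≤ wdeg e :=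
  le_trans (Nat.le_mul_of_pos_right _ (Nat.succ_pos i)) (mul_le_wdeg e i)

lemma lt_of_mem_support_wdeg {e : ℕ →₀ ℕ} {i : ℕ} (h : i ∈ e.support) : i < wdeg e := by
  have h1 : 1 ≤ e i := Nat.one_le_iff_ne_zero.mpr (Finsupp.mem_support_iff.mp h)
  have := mul_le_wdeg e i
  nlinarith

/-- the bump: remove one `u_i`, add one `u_{i+1}`. -/
lemma wdeg_bump {e : ℕ →₀ ℕ} {i : ℕ} (hi : e i ≠ 0) :
    wdeg (e - Finsupp.single i 1 + Finsupp.single (i + 1) 1) = wdeg e + 1 := by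
  have hle : Finsupp.single i 1 ≤ e := by
    rw [Finsupp.single_le_iff]; omega
  have he : e - Finsupp.single i 1 + Finsupp.single i 1 = e := tsub_add_cancel_of_le hle
  have h1 : wdeg (e - Finsupp.single i 1) + (i + 1) = wdeg e := by
    have := wdeg_single i 1
    have h2 := wdeg_add (e - Finsupp.single i 1) (Finsupp.single i 1)
    rw [he] at h2
    omega
  rw [wdeg_add, wdeg_single]
  omega

end Aux
section Nm

/-- base-`B` encoding of an exponent vector -/
noncomputable def Nm (B : ℕ) (e : ℕ →₀ ℕ) : ℕ := ∑ i ∈ e.support, e i * B ^ i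

lemma sum_range_lt_pow {B : ℕ} (hB : 1 ≤ B) (f : ℕ → ℕ) (hf : ∀ i, f i < B) (k : ℕ) :
    ∑ i ∈ Finset.range k, f i * B ^ i < B ^ k := by
  induction k with
  | zero => simp
  | succ k ih =>
    rw [Finset.sum_range_succ, pow_succ]
    have h1 : f k * B ^ k ≤ (B - 1) * B ^ k :=
      Nat.mul_le_mul_right _ (by have := hf k; omega)
    have h2 : 0 < B ^ k := Nat.pow_pos (by omega)
    nlinarith [hf k]

lemma Nm_eq_sum_range {B : ℕ} {e : ℕ →₀ ℕ} {k : ℕ} (hs : ∀ i, k ≤ i → e i = 0) :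
    Nm B e = ∑ i ∈ Finset.range k, e i * B ^ i := by
  apply Finset.sum_subset
  · intro i hi
    simp only [Finset.mem_range]
    by_contra hlt
    exact Finsupp.mem_support_iff.mp hi (hs i (by omega))
  · intro i _ hi
    simp [Finsupp.notMem_support_iff.mp (by simpa using hi)]

lemma Nm_lt_pow {B : ℕ} (hB : 1 ≤ B) {e : ℕ →₀ ℕ} {k : ℕ}
    (he : ∀ i, e i < B) (hs : ∀ i, k ≤ i → e i = 0) : Nm B e < B ^ k := by
  rw [Nm_eq_sum_range hs]
  exact sum_range_lt_pow hB _ he k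

lemma pow_le_Nm {B : ℕ} {e : ℕ →₀ ℕ} {k : ℕ} (hk : e k ≠ 0) : B ^ k ≤ Nm B e := by
  have hmem : k ∈ e.support := Finsupp.mem_support_iff.mpr hk
  calc B ^ k ≤ e k * B ^ k := Nat.le_mul_of_pos_left _ (by omega)
    _ ≤ Nm B e := Finset.single_le_sum (f := fun i => e i * B ^ i)
        (fun j _ => Nat.zero_le _) hmem

lemma digits_aux {B : ℕ} (hB : 1 ≤ B) (k : ℕ) :
    ∀ f g : ℕ → ℕ, (∀ i, f i < B) → (∀ i, g i < B) →
    (∑ i ∈ Finset.range k, f i * B ^ i = ∑ i ∈ Finset.range k, g i * B ^ i) →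
    ∀ i < k, f i = g i := by
  induction k with
  | zero => intro f g _ _ _ i hi; omega
  | succ k ih =>
    intro f g hf hg hsum i hi
    rw [Finset.sum_range_succ, Finset.sum_range_succ] at hsum
    have h1 := sum_range_lt_pow hB f hf k
    have h2 := sum_range_lt_pow hB g hg k
    have hk : f k = g k := by
      rcases lt_trichotomy (f k) (g k) with h | h | h
      · have h3 : (f k + 1) * B ^ k ≤ g k * B ^ k := Nat.mul_le_mul_right _ (by omega)
        rw [add_mul, one_mul] at h3
        omega
      · exact h
      · have h3 : (g k + 1) * B ^ k ≤ f k * B ^ k := Nat.mul_le_mul_right _ (by omega)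
        rw [add_mul, one_mul] at h3
        omega
    rw [hk] at hsum
    have hs' : ∑ i ∈ Finset.range k, f i * B ^ i = ∑ i ∈ Finset.range k, g i * B ^ i := by
      omega
    rcases Nat.lt_or_ge i k with h | h
    · exact ih f g hf hg hs' i h
    · have : i = k := by omega
      rw [this, hk]

lemma Nm_injective {B : ℕ} (hB : 1 ≤ B) {e e' : ℕ →₀ ℕ} {k : ℕ}
    (he : ∀ i, e i < B) (he' : ∀ i, e' i < B)
    (hs : ∀ i, k ≤ i → e i = 0) (hs' : ∀ i, k ≤ i → e' i = 0)
    (h : Nm B e = Nm B e') : e = e' := by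
  rw [Nm_eq_sum_range hs, Nm_eq_sum_range hs'] at h
  ext i
  rcases Nat.lt_or_ge i k with hik | hik
  · exact digits_aux hB k (fun i => e i) (fun i => e' i) he he' h i hik
  · rw [hs i hik, hs' i hik]

end Nm
section Poly

lemma dxU_monomial (e : ℕ →₀ ℕ) (a : ℚ) :
    dxU (monomial e a) = ∑ i ∈ e.support,
      monomial (e - Finsupp.single i 1 + Finsupp.single (i + 1) 1) (a * e i) := by
  show (MvPolynomial.mkDerivation ℚ (fun i => (X (i + 1) : UPoly))) (monomial e a) = _
  rw [mkDerivation_monomial, Finsupp.sum, Finset.smul_sum]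
  refine Finset.sum_congr rfl fun i hi => ?_
  rw [smul_eq_mul, X, monomial_mul, mul_one, MvPolynomial.smul_monomial, smul_eq_mul]

lemma coeff_dxU_monomial (F e : ℕ →₀ ℕ) (a : ℚ) :
    coeff F (dxU (monomial e a)) = ∑ i ∈ e.support,
      if e - Finsupp.single i 1 + Finsupp.single (i + 1) 1 = F then a * e i else 0 := by
  rw [dxU_monomial, coeff_sum]
  exact Finset.sum_congr rfl fun i _ => coeff_monomial _ _ _

lemma coeff_dxU (p : UPoly) (F : ℕ →₀ ℕ) :
    coeff F (dxU p) = ∑ e ∈ p.support, ∑ i ∈ e.support,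
      if e - Finsupp.single i 1 + Finsupp.single (i + 1) 1 = F then coeff e p * e i else 0 := by
  conv_lhs => rw [← support_sum_monomial_coeff p]
  rw [map_sum, coeff_sum]
  exact Finset.sum_congr rfl fun e _ => coeff_dxU_monomial F e _

lemma X0_mul_monomial (e : ℕ →₀ ℕ) (a : ℚ) :
    (X 0 : UPoly) * monomial e a = monomial (Finsupp.single 0 1 + e) a := by
  rw [X, monomial_mul, one_mul]

lemma coeff_X0_mul (p : UPoly) (F : ℕ →₀ ℕ) :
    coeff F ((X 0 : UPoly) * p) = ∑ e ∈ p.support,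
      if Finsupp.single 0 1 + e = F then coeff e p else 0 := by
  conv_lhs => rw [← support_sum_monomial_coeff p]
  rw [Finset.mul_sum, coeff_sum]
  refine Finset.sum_congr rfl fun e _ => ?_
  rw [X0_mul_monomial, coeff_monomial]

lemma isWH_dxU {p : UPoly} {n : ℕ} (hp : p.IsWeightedHomogeneous ww n) :
    (dxU p).IsWeightedHomogeneous ww (n + 1) := by
  intro F hF
  rw [coeff_dxU] at hF
  obtain ⟨e, he, hne⟩ := Finset.exists_ne_zero_of_sum_ne_zero hF
  obtain ⟨i, hi, hne'⟩ := Finset.exists_ne_zero_of_sum_ne_zero hne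
  have hcond : e - Finsupp.single i 1 + Finsupp.single (i + 1) 1 = F := by
    by_contra hc
    simp [hc] at hne'
  have hei : e i ≠ 0 := Finsupp.mem_support_iff.mp hi
  have := wdeg_bump hei
  rw [hcond] at this
  have hwe : wdeg e = n := hp (Finsupp.mem_support_iff.mp he)
  rw [show (Finsupp.weight ww) F = wdeg F from rfl, this, hwe]

lemma isWH_X0_mul {p : UPoly} {n : ℕ} (hp : p.IsWeightedHomogeneous ww n) :
    ((X 0 : UPoly) * p).IsWeightedHomogeneous ww (n + 1) := by
  have := (isWeightedHomogeneous_X ℚ ww 0).mul hp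
  simpa [add_comm] using this

lemma isWH_smul {p : UPoly} {n : ℕ} (c : ℚ) (hp : p.IsWeightedHomogeneous ww n) :
    (c • p).IsWeightedHomogeneous ww n := by
  intro F hF
  apply hp
  intro h0
  rw [MvPolynomial.coeff_smul, h0, smul_zero] at hF
  exact hF rfl

lemma isWH_sub {p q : UPoly} {n : ℕ} (hp : p.IsWeightedHomogeneous ww n)
    (hq : q.IsWeightedHomogeneous ww n) : (p - q).IsWeightedHomogeneous ww n := by
  intro F hF
  rw [MvPolynomial.coeff_sub] at hF
  by_cases h1 : coeff F p = 0
  · exact hq (by intro h2; rw [h1, h2] at hF; simp at hF)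
  · exact hp h1

lemma coeff_dxB (f : UDiff) (m : ℕ) :
    PowerSeries.coeff m (dxB f) =
      dxU (PowerSeries.coeff m f) +
        ((m : ℚ) + 1) • ((X 0 : UPoly) * PowerSeries.coeff (m + 1) f) := by
  simp [dxB, PowerSeries.coeff_mk]

lemma isHomB_dxB {n : ℕ} {f : UDiff} (hf : IsHomB n f) : IsHomB (n + 1) (dxB f) := by
  intro m
  rw [coeff_dxB]
  exact (isWH_dxU (hf m)).add (isWH_smul _ (isWH_X0_mul (hf (m + 1))))

end Poly
section Component

lemma WHC_commute (L : UPoly →ₗ[ℚ] UPoly)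
    (hL : ∀ (e : ℕ →₀ ℕ) (a : ℚ), (L (monomial e a)).IsWeightedHomogeneous ww (wdeg e + 1))
    (n : ℕ) (p : UPoly) :
    weightedHomogeneousComponent ww (n + 1) (L p) =
      L (weightedHomogeneousComponent ww n p) := by
  induction p using MvPolynomial.induction_on' with
  | monomial u a =>
    by_cases hw : wdeg u = n
    · rw [IsWeightedHomogeneous.weightedHomogeneousComponent_same (by rw [← hw]; exact hL u a),
        IsWeightedHomogeneous.weightedHomogeneousComponent_same
          (isWeightedHomogeneous_monomial ww u a hw)]
    · rw [IsWeightedHomogeneous.weightedHomogeneousComponent_ne _ (hL u a) (by omega),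
        IsWeightedHomogeneous.weightedHomogeneousComponent_ne _
          (isWeightedHomogeneous_monomial ww u a rfl) (by intro hc; rw [hc] at hw; exact hw rfl),
        map_zero]
  | add p q hp hq =>
    rw [map_add, map_add, map_add, hp, hq, map_add]

lemma hL_dxU : ∀ (e : ℕ →₀ ℕ) (a : ℚ),
    ((dxU : UPoly →ₗ[ℚ] UPoly) (monomial e a)).IsWeightedHomogeneous ww (wdeg e + 1) := by
  intro e a
  rw [show (dxU : UPoly →ₗ[ℚ] UPoly) (monomial e a) = dxU (monomial e a) from rfl, dxU_monomial]
  apply IsWeightedHomogeneous.sum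
  intro i hi
  exact isWeightedHomogeneous_monomial ww _ _ (wdeg_bump (Finsupp.mem_support_iff.mp hi))

lemma hL_X0 : ∀ (e : ℕ →₀ ℕ) (a : ℚ),
    ((LinearMap.mulLeft ℚ (X 0 : UPoly)) (monomial e a)).IsWeightedHomogeneous ww (wdeg e + 1) := by
  intro e a
  rw [LinearMap.mulLeft_apply, X0_mul_monomial]
  apply isWeightedHomogeneous_monomial
  show wdeg (Finsupp.single 0 1 + e) = wdeg e + 1
  rw [wdeg_add, wdeg_single]
  omega

lemma coeff_dxB_component (n : ℕ) (f : UDiff) (m : ℕ) :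
    PowerSeries.coeff m (dxB (PowerSeries.mk fun m' =>
        weightedHomogeneousComponent ww n (PowerSeries.coeff m' f))) =
      weightedHomogeneousComponent ww (n + 1) (PowerSeries.coeff m (dxB f)) := by
  rw [coeff_dxB, coeff_dxB, PowerSeries.coeff_mk, PowerSeries.coeff_mk, map_add]
  congr 1
  · exact (WHC_commute dxU hL_dxU n _).symm
  · rw [map_smul]
    congr 1
    have := WHC_commute (LinearMap.mulLeft ℚ (X 0 : UPoly)) hL_X0 n (PowerSeries.coeff (m + 1) f)
    simpa [LinearMap.mulLeft_apply] using this.symm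

end Component
section Uniq

lemma uniq_comb {B : ℕ} (hB : 1 ≤ B) {e₀ e : ℕ →₀ ℕ} {t i : ℕ}
    (hte : e₀ t ≠ 0) (htop : ∀ j, t < j → e₀ j = 0)
    (he0 : ∀ j, e₀ j < B)
    (hle : Nm B e ≤ Nm B e₀)
    (hi : e i ≠ 0)
    (hcond : e - Finsupp.single i 1 + Finsupp.single (i + 1) 1 =
      e₀ - Finsupp.single t 1 + Finsupp.single (t + 1) 1) :
    e = e₀ ∧ i = t := by
  have hesupp : ∀ j, t + 1 ≤ j → e j = 0 := by
    intro j hj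
    by_contra h0
    have h1 : B ^ (t + 1) ≤ B ^ j := Nat.pow_le_pow_right (by omega) hj
    have h2 := pow_le_Nm (B := B) (e := e) (k := j) h0
    have h3 := Nm_lt_pow hB he0 (k := t + 1) (fun i hi => htop i (by omega))
    omega
  have hit : i = t := by
    have hc := DFunLike.congr_fun hcond (t + 1)
    simp only [Finsupp.add_apply, Finsupp.tsub_apply, Finsupp.single_apply] at hc
    have h1 : e (t + 1) = 0 := hesupp (t + 1) le_rfl
    have h2 : e₀ (t + 1) = 0 := htop (t + 1) (by omega)
    split_ifs at hc <;> omega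
  subst hit
  refine ⟨?_, rfl⟩
  ext j
  have hc := DFunLike.congr_fun hcond j
  simp only [Finsupp.add_apply, Finsupp.tsub_apply, Finsupp.single_apply] at hc
  rcases eq_or_ne i j with h | hne
  · have h1 : e j ≠ 0 := h ▸ hi
    have h2 : e₀ j ≠ 0 := h ▸ hte
    have h3 : ¬(i + 1 = j) := by omega
    simp only [if_neg h3, if_pos h] at hc
    omega
  · simp only [if_neg hne] at hc
    split_ifs at hc <;> omega

lemma dxB_special_zero (n : ℕ) (f : UDiff) (hf : IsHomB (n + 1) f)
    (hsp : ∀ m : ℕ, ∀ e ∈ (PowerSeries.coeff m (dxB f)).support, TopMultTwo e) :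
    dxB f = 0 := by
  by_cases hf0 : f = 0
  · rw [hf0, map_zero]
  exfalso
  set B := n + 2 with hBdef
  have hB1 : 1 ≤ B := by omega
  have hent : ∀ m : ℕ, ∀ e ∈ (PowerSeries.coeff m f).support,
      (∀ i, e i < B) ∧ (∀ i, n + 1 ≤ i → e i = 0) ∧ wdeg e = n + 1 := by
    intro m e he
    have hw : wdeg e = n + 1 := hf m (Finsupp.mem_support_iff.mp he)
    refine ⟨fun i => ?_, fun i hi => ?_, hw⟩
    · have := apply_le_wdeg e i; omega
    · by_contra h0
      have := lt_of_mem_support_wdeg (Finsupp.mem_support_iff.mpr h0)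
      omega
  set S : Set ℕ := {v | ∃ m : ℕ, ∃ e ∈ (PowerSeries.coeff m f).support, Nm B e = v}
    with hS
  have hSne : S.Nonempty := by
    have : ∃ m, PowerSeries.coeff m f ≠ 0 := by
      by_contra hc
      push_neg at hc
      exact hf0 (PowerSeries.ext fun m => by rw [hc m, map_zero])
    obtain ⟨m, hm⟩ := this
    obtain ⟨e, he⟩ := (MvPolynomial.support_nonempty.mpr hm)
    exact ⟨Nm B e, m, e, he, rfl⟩
  have hSbdd : BddAbove S := by
    refine ⟨B ^ (n + 1), fun v hv => ?_⟩
    obtain ⟨m, e, he, rfl⟩ := hv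
    exact le_of_lt (Nm_lt_pow hB1 (hent m e he).1 (hent m e he).2.1)
  obtain ⟨m₀, e₀, he₀, hNe₀⟩ := Nat.sSup_mem hSne hSbdd
  have hmax : ∀ m : ℕ, ∀ e ∈ (PowerSeries.coeff m f).support, Nm B e ≤ Nm B e₀ := by
    intro m e he
    rw [hNe₀]
    exact le_csSup hSbdd ⟨m, e, he, rfl⟩
  have he₀w : wdeg e₀ = n + 1 := (hent m₀ e₀ he₀).2.2
  have he₀B : ∀ i, e₀ i < B := (hent m₀ e₀ he₀).1
  have he₀ne : e₀.support.Nonempty := by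
    rw [Finsupp.support_nonempty_iff]
    intro h0
    rw [h0] at he₀w
    simp [wdeg] at he₀w
  set t := e₀.support.max' he₀ne with ht
  have hte : e₀ t ≠ 0 := Finsupp.mem_support_iff.mp (e₀.support.max'_mem he₀ne)
  have htop : ∀ j, t < j → e₀ j = 0 := by
    intro j hj
    by_contra h0
    exact absurd (Finset.le_max' _ j (Finsupp.mem_support_iff.mpr h0)) (by omega)
  set F := e₀ - Finsupp.single t 1 + Finsupp.single (t + 1) 1 with hFdef
  have hFval : ∀ j, F j = e₀ j - (if t = j then 1 else 0) + (if t + 1 = j then 1 else 0) := by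
    intro j
    simp [hFdef, Finsupp.tsub_apply, Finsupp.add_apply, Finsupp.single_apply]
  have hFt1 : F (t + 1) = 1 := by
    rw [hFval]
    have := htop (t + 1) (by omega)
    split_ifs <;> omega
  have hnsp : ¬ TopMultTwo F := by
    rintro ⟨k, hk, h2, hmax'⟩
    have h1 : t + 1 ∈ F.support := Finsupp.mem_support_iff.mpr (by rw [hFt1]; omega)
    have h3 := hmax' (t + 1) h1
    have h4 : F k = 0 ∨ k ≤ t + 1 := by
      rcases Nat.lt_or_ge (t + 1) k with hlt | hge
      · left
        rw [hFval]
        have := htop k (by omega)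
        split_ifs <;> omega
      · right; exact hge
    have h5 : k = t + 1 := by
      rcases h4 with h4 | h4
      · exact absurd h4 (Finsupp.mem_support_iff.mp hk)
      · omega
    rw [h5, hFt1] at h2
    omega
  have hc0 : coeff e₀ (PowerSeries.coeff m₀ f) ≠ 0 := Finsupp.mem_support_iff.mp he₀
  have hdxu : coeff F (dxU (PowerSeries.coeff m₀ f)) =
      coeff e₀ (PowerSeries.coeff m₀ f) * e₀ t := by
    rw [coeff_dxU]
    rw [Finset.sum_eq_single e₀]
    · rw [Finset.sum_eq_single t]
      · rw [if_pos rfl]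
      · intro i hi hit
        rw [if_neg]
        intro hcond
        exact hit (uniq_comb hB1 hte htop he₀B (le_refl _) (Finsupp.mem_support_iff.mp hi) hcond).2
      · intro ht'
        exact absurd (e₀.support.max'_mem he₀ne) ht'
    · intro e he hene
      apply Finset.sum_eq_zero
      intro i hi
      rw [if_neg]
      intro hcond
      exact hene (uniq_comb hB1 hte htop he₀B (hmax m₀ e he) (Finsupp.mem_support_iff.mp hi) hcond).1
    · intro he₀'
      exact absurd he₀ he₀'
  have hX0 : coeff F ((X 0 : UPoly) * (PowerSeries.coeff (m₀ + 1) f)) = 0 := by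
    rw [coeff_X0_mul]
    apply Finset.sum_eq_zero
    intro e he
    rw [if_neg]
    intro hcond
    have hc := DFunLike.congr_fun hcond (t + 1)
    simp only [Finsupp.add_apply, Finsupp.single_apply] at hc
    rw [hFt1] at hc
    have het1 : e (t + 1) ≠ 0 := by
      rw [if_neg (fun h => Nat.succ_ne_zero t h.symm)] at hc
      omega
    have h2 := pow_le_Nm (B := B) het1
    have h3 := Nm_lt_pow hB1 he₀B (k := t + 1) (fun i hi => htop i (by omega))
    have h4 := hmax (m₀ + 1) e he
    omega
  have hne : coeff F (PowerSeries.coeff m₀ (dxB f)) ≠ 0 := by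
    rw [coeff_dxB, MvPolynomial.coeff_add, hdxu, MvPolynomial.coeff_smul, hX0, smul_zero, add_zero]
    exact mul_ne_zero hc0 (Nat.cast_ne_zero.mpr hte)
  exact hnsp (hsp m₀ F (Finsupp.mem_support_iff.mpr hne))

end Uniq
section Exist

lemma exists_special (d : ℕ) (hd : 2 ≤ d) :
    ∀ nb : ℕ, ∀ h : UDiff, IsHomB d h →
      (∀ m : ℕ, ∀ e ∈ (PowerSeries.coeff m h).support, ¬TopMultTwo e → Nm (d + 1) e < nb) →
      ∃ θ f : UDiff, IsHomB d θ ∧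
        (∀ m : ℕ, ∀ e ∈ (PowerSeries.coeff m θ).support, TopMultTwo e) ∧
        h = θ + dxB f := by
  intro nb
  induction nb with
  | zero =>
    intro h hhom hbad
    refine ⟨h, 0, hhom, ?_, by rw [map_zero, add_zero]⟩
    intro m e he
    by_contra hT
    exact absurd (hbad m e he hT) (by omega)
  | succ nb ih =>
    intro h hhom hbad
    by_cases hex : ∃ m : ℕ, ∃ e ∈ (PowerSeries.coeff m h).support,
        ¬TopMultTwo e ∧ Nm (d + 1) e = nb
    case neg =>
      apply ih h hhom
      intro m e he hT
      have h1 := hbad m e he hT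
      have h2 : Nm (d + 1) e ≠ nb := fun hc => hex ⟨m, e, he, hT, hc⟩
      omega
    case pos =>
    obtain ⟨m₁, e₀, he₀, hT₀, hN₀⟩ := hex
    have hw₀ : wdeg e₀ = d := hhom m₁ (Finsupp.mem_support_iff.mp he₀)
    have hne₀ : e₀.support.Nonempty := by
      rw [Finsupp.support_nonempty_iff]
      intro h0
      rw [h0] at hw₀
      simp [wdeg] at hw₀
      omega
    set k := e₀.support.max' hne₀ with hk
    have hek : e₀ k ≠ 0 := Finsupp.mem_support_iff.mp (e₀.support.max'_mem hne₀)
    have htop : ∀ j, k < j → e₀ j = 0 := by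
      intro j hj
      by_contra h0
      exact absurd (Finset.le_max' _ j (Finsupp.mem_support_iff.mpr h0)) (by omega)
    have hek1 : e₀ k = 1 := by
      by_contra h2
      exact hT₀ ⟨k, e₀.support.max'_mem hne₀, by omega,
        fun j hj => Finset.le_max' _ j hj⟩
    have hk1 : 1 ≤ k := by
      by_contra h0
      have hk0 : k = 0 := by omega
      have : e₀ = Finsupp.single 0 (e₀ 0) := by
        ext j
        rcases Nat.eq_zero_or_pos j with rfl | hj
        · simp [Finsupp.single_apply]
        · rw [htop j (by omega), Finsupp.single_apply, if_neg (by omega)]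
      rw [this, wdeg_single] at hw₀
      rw [← hk0] at hw₀
      rw [hek1] at hw₀
      omega
    clear hk
    clear_value k
    set e' := e₀ - Finsupp.single k 1 + Finsupp.single (k - 1) 1 with he'def
    have he'vals : ∀ j, e' j = e₀ j - (if k = j then 1 else 0) + (if k - 1 = j then 1 else 0) := by
      intro j
      simp [he'def, Finsupp.tsub_apply, Finsupp.add_apply, Finsupp.single_apply]
    have he'k1 : e' (k - 1) = e₀ (k - 1) + 1 := by
      rw [he'vals, if_neg (by omega), if_pos rfl]
      omega
    have he'k : e' k = 0 := by
      rw [he'vals, if_pos rfl, if_neg (by omega)]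
      omega
    have he'supp : ∀ j, k ≤ j → e' j = 0 := by
      intro j hj
      rcases Nat.eq_or_lt_of_le hj with rfl | hlt
      · exact he'k
      · rw [he'vals, htop j hlt, if_neg (by omega), if_neg (by omega)]
    have hk1mem : k - 1 ∈ e'.support := Finsupp.mem_support_iff.mpr (by omega)
    have hwe' : wdeg e' + 1 = d := by
      have hle : Finsupp.single k 1 ≤ e₀ := by
        rw [Finsupp.single_le_iff]; omega
      have hcancel : e₀ - Finsupp.single k 1 + Finsupp.single k 1 = e₀ :=
        tsub_add_cancel_of_le hle
      have h1 := wdeg_add (e₀ - Finsupp.single k 1) (Finsupp.single k 1)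
      rw [hcancel, wdeg_single] at h1
      have h2 := wdeg_add (e₀ - Finsupp.single k 1) (Finsupp.single (k - 1) 1)
      rw [wdeg_single] at h2
      rw [he'def, h2]
      omega
    have hkk : k - 1 + 1 = k := by omega
    have hkey : e' - Finsupp.single (k - 1) 1 + Finsupp.single (k - 1 + 1) 1 = e₀ := by
      rw [hkk]
      ext j
      simp only [Finsupp.add_apply, Finsupp.tsub_apply, Finsupp.single_apply]
      rw [he'vals]
      rcases eq_or_ne k j with h | h
      · have h' : e₀ j = 1 := h ▸ hek1
        split_ifs <;> omega
      · split_ifs <;> omega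
    have hsrc : ∀ i, i ∈ e'.support → i ≠ k - 1 →
        e' - Finsupp.single i 1 + Finsupp.single (i + 1) 1 ≠ e₀ := by
      intro i hi hik hcond
      have hile : i < k := by
        by_contra h0
        exact Finsupp.mem_support_iff.mp hi (he'supp i (by omega))
      have hc := DFunLike.congr_fun hcond k
      simp only [Finsupp.add_apply, Finsupp.tsub_apply, Finsupp.single_apply] at hc
      rw [if_neg (by omega), if_neg (by omega)] at hc
      rw [he'k] at hc
      omega
    have hsrc0 : Finsupp.single 0 1 + e' ≠ e₀ := by
      intro hcond
      have hc := DFunLike.congr_fun hcond k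
      simp only [Finsupp.add_apply, Finsupp.single_apply] at hc
      rw [if_neg (by omega), he'k] at hc
      omega
    -- the correction term
    set c : ℕ → ℚ := fun m =>
      coeff e₀ (PowerSeries.coeff m h) / ((e₀ (k - 1) : ℚ) + 1) with hc_def
    set g : UDiff := PowerSeries.mk fun m => monomial e' (c m) with hg_def
    have hgm : ∀ m, PowerSeries.coeff m g = monomial e' (c m) := fun m =>
      PowerSeries.coeff_mk _ _
    have hcoeffg : ∀ (m : ℕ) (F : ℕ →₀ ℕ),
        coeff F (PowerSeries.coeff m (dxB g)) =
          (∑ i ∈ e'.support,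
            if e' - Finsupp.single i 1 + Finsupp.single (i + 1) 1 = F then c m * e' i else 0)
          + ((m : ℚ) + 1) *
            (if Finsupp.single 0 1 + e' = F then c (m + 1) else 0) := by
      intro m F
      rw [coeff_dxB, hgm, hgm, MvPolynomial.coeff_add, coeff_dxU_monomial,
        MvPolynomial.coeff_smul, X0_mul_monomial, coeff_monomial, smul_eq_mul]
    set h' := h - dxB g with hh'def
    have hch' : ∀ m F, coeff F (PowerSeries.coeff m h') =
        coeff F (PowerSeries.coeff m h) -
          ((∑ i ∈ e'.support,
            if e' - Finsupp.single i 1 + Finsupp.single (i + 1) 1 = F then c m * e' i else 0)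
          + ((m : ℚ) + 1) *
            (if Finsupp.single 0 1 + e' = F then c (m + 1) else 0)) := by
      intro m F
      rw [hh'def, map_sub, MvPolynomial.coeff_sub, hcoeffg]
    have hhom' : IsHomB d h' := by
      intro m
      rw [hh'def, map_sub]
      apply isWH_sub (hhom m)
      rw [coeff_dxB, hgm, hgm]
      apply IsWeightedHomogeneous.add
      · have := hL_dxU e' (c m)
        rw [hwe'] at this
        exact this
      · apply isWH_smul
        have := hL_X0 e' (c (m + 1))
        rw [hwe'] at this
        rw [LinearMap.mulLeft_apply] at this
        exact this
    have hcancel : ∀ m, coeff e₀ (PowerSeries.coeff m h') = 0 := by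
      intro m
      rw [hch']
      rw [Finset.sum_eq_single (k - 1)]
      · rw [if_pos hkey, if_neg hsrc0, mul_zero, add_zero, he'k1]
        rw [hc_def]
        have hne : ((e₀ (k - 1) : ℚ) + 1) ≠ 0 := by positivity
        push_cast
        field_simp
        ring
      · intro i hi hik
        rw [if_neg (hsrc i hi hik)]
      · intro habs
        exact absurd hk1mem habs
    have hbad' : ∀ m : ℕ, ∀ F ∈ (PowerSeries.coeff m h').support,
        ¬TopMultTwo F → Nm (d + 1) F < nb := by
      intro m F hF hTF
      have hFne₀ : F ≠ e₀ := by
        intro hc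
        exact Finsupp.mem_support_iff.mp hF (by rw [hc]; exact hcancel m)
      have hwF : wdeg F = d := hhom' m (Finsupp.mem_support_iff.mp hF)
      have hFB : ∀ i, F i < d + 1 := by
        intro i
        have := apply_le_wdeg F i
        omega
      by_cases hnew : (∃ i ∈ e'.support,
          e' - Finsupp.single i 1 + Finsupp.single (i + 1) 1 = F) ∨
          (Finsupp.single 0 1 + e' = F)
      · -- new exponent : supported below k
        have hFk : ∀ j, k ≤ j → F j = 0 := by
          rcases hnew with ⟨i, hi, hiF⟩ | h0F
          · have hik : i ≠ k - 1 := by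
              intro hik
              rw [hik, hkey] at hiF
              exact hFne₀ hiF.symm
            have hile : i < k := by
              by_contra hcon
              exact Finsupp.mem_support_iff.mp hi (he'supp i (by omega))
            intro j hj
            have hc := DFunLike.congr_fun hiF j
            simp only [Finsupp.add_apply, Finsupp.tsub_apply, Finsupp.single_apply] at hc
            rw [if_neg (by omega)] at hc
            rw [he'supp j hj] at hc
            split_ifs at hc <;> omega
          · intro j hj
            have hc := DFunLike.congr_fun h0F j
            simp only [Finsupp.add_apply, Finsupp.single_apply] at hc
            rw [if_neg (by omega), he'supp j hj] at hc
            omega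
        have h1 : Nm (d + 1) F < (d + 1) ^ k := Nm_lt_pow (by omega) hFB hFk
        have h2 : (d + 1) ^ k ≤ Nm (d + 1) e₀ := pow_le_Nm hek
        omega
      · -- old exponent
        push_neg at hnew
        have hcoeffF : coeff F (PowerSeries.coeff m h') =
            coeff F (PowerSeries.coeff m h) := by
          rw [hch']
          rw [Finset.sum_eq_zero, if_neg hnew.2, mul_zero, add_zero, sub_zero]
          intro i hi
          rw [if_neg (hnew.1 i hi)]
        have hFh : F ∈ (PowerSeries.coeff m h).support := by
          rw [MvPolynomial.mem_support_iff, ← hcoeffF]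
          exact MvPolynomial.mem_support_iff.mp hF
        have h1 := hbad m F hFh hTF
        have h2 : Nm (d + 1) F ≠ nb := by
          intro hceq
          apply hFne₀
          refine Nm_injective (B := d + 1) (by omega) (k := d) hFB ?_ ?_ ?_ ?_
          · intro i
            have := apply_le_wdeg e₀ i
            omega
          · intro i hi
            by_contra h0
            have := lt_of_mem_support_wdeg (Finsupp.mem_support_iff.mpr h0)
            omega
          · intro i hi
            by_contra h0
            have := lt_of_mem_support_wdeg (Finsupp.mem_support_iff.mpr h0)
            omega
          · rw [hceq, hN₀]
        omega
    obtain ⟨θ, f', hθhom, hθsp, heq⟩ := ih h' hhom' hbad'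
    refine ⟨θ, f' + g, hθhom, hθsp, ?_⟩
    rw [map_add]
    rw [hh'def] at heq
    have : h = θ + dxB f' + dxB g := by
      rw [← heq]
      ring
    rw [this]
    ring

end Exist
/-- Every homogeneous differential polynomial `h` of degree `d ≥ 2` (power series
coefficients in `u_0`) has a unique density modulo `im ∂_x`: a homogeneous `θ` of degree
`d` with `h - θ ∈ im ∂_x`, all of whose monomials have their highest-index derivative
variable with multiplicity at least 2 (hence at least two factors). -/
theorem exists_unique_special_density (d : ℕ) (hd : 2 ≤ d) (h : UDiff)
    (hhom : IsHomB d h) :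
    ∃! θ : UDiff,
      IsHomB d θ ∧
      (∀ m : ℕ, ∀ e ∈ (PowerSeries.coeff m θ).support, TopMultTwo e) ∧
      ∃ f : UDiff, h - θ = dxB f := by
  have hbound : ∀ m : ℕ, ∀ e ∈ (PowerSeries.coeff m h).support,
      ¬TopMultTwo e → Nm (d + 1) e < (d + 1) ^ d := by
    intro m e he _
    have hw : wdeg e = d := hhom m (MvPolynomial.mem_support_iff.mp he)
    apply Nm_lt_pow (by omega)
    · intro i
      have := apply_le_wdeg e i
      omega
    · intro i hi
      by_contra h0
      have := lt_of_mem_support_wdeg (Finsupp.mem_support_iff.mpr h0)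
      omega
  obtain ⟨θ, f, hθhom, hθsp, heq⟩ := exists_special d hd ((d + 1) ^ d) h hhom hbound
  refine ⟨θ, ⟨hθhom, hθsp, f, by rw [heq]; ring⟩, ?_⟩
  rintro θ' ⟨hθ'hom, hθ'sp, f', heq'⟩
  -- the difference is special, homogeneous, and in the image of dxB
  have hδdx : θ' - θ = dxB (f - f') := by
    rw [map_sub, ← heq']
    have h2 : h - θ = dxB f := by rw [heq]; ring
    rw [← h2]
    ring
  have hδhom : IsHomB d (θ' - θ) := by
    intro m
    rw [map_sub]
    exact isWH_sub (hθ'hom m) (hθhom m)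
  have hδsp : ∀ m : ℕ, ∀ e ∈ (PowerSeries.coeff m (θ' - θ)).support, TopMultTwo e := by
    intro m e he
    have hne := MvPolynomial.mem_support_iff.mp he
    rw [map_sub, MvPolynomial.coeff_sub] at hne
    by_cases h1 : coeff e (PowerSeries.coeff m θ') = 0
    · refine hθsp m e (MvPolynomial.mem_support_iff.mpr ?_)
      intro h2
      rw [h1, h2] at hne
      simp at hne
    · exact hθ'sp m e (MvPolynomial.mem_support_iff.mpr h1)
  obtain ⟨n, rfl⟩ : ∃ n, d = n + 2 := ⟨d - 2, by omega⟩
  set fg : UDiff := PowerSeries.mk fun m' =>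
    weightedHomogeneousComponent ww (n + 1) (PowerSeries.coeff m' (f - f')) with hfg
  have hδfg : θ' - θ = dxB fg := by
    refine PowerSeries.ext fun m => ?_
    rw [hfg, coeff_dxB_component (n + 1) (f - f') m, ← hδdx]
    exact (IsWeightedHomogeneous.weightedHomogeneousComponent_same (hδhom m)).symm
  have hδ0 : θ' - θ = 0 := by
    rw [hδfg]
    apply dxB_special_zero n fg ?_ ?_
    · intro m
      rw [hfg, PowerSeries.coeff_mk]
      exact weightedHomogeneousComponent_isWeightedHomogeneous (n + 1) _
    · intro m e he
      rw [← hδfg] at he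
      exact hδsp m e he
  exact sub_eq_zero.mp hδ0
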